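/- Let n ≥ 2 be an integer. If 0 ≤ s < t are real numbers with H_n'(s) = 0 and H_n'(t) = 0, then |H_n(s)| < |H_n(t)|; that is, the successive relative maxima of t ↦ |H_n(t)| form an increasing sequence for t ≥ 0. -/

import Mathlib

/-!
Sonin's function `E = 2n H_n² + (H_n')²` satisfies `E' = 4x (H_n')²` by Hermite's equation
`H_n'' = 2x H_n' - 2n H_n`, so it is strictly increasing on `[0, ∞)` (its derivative vanishes
only at finitely many points). At a critical point of `H_n` it equals `2n H_n²`.
-/

open Polynomial Real Set

/-- Physicists' Hermite polynomials: `H 0 = 1`, `H 1 = 2X`,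
`H (n+2) = 2X * H (n+1) - 2(n+1) * H n`. -/
noncomputable def hermiteH : ℕ → Polynomial ℝ
  | 0 => 1
  | 1 => Polynomial.C 2 * Polynomial.X
  | (n + 2) => Polynomial.C 2 * Polynomial.X * hermiteH (n + 1)
      - Polynomial.C ((2 * (n + 1) : ℕ) : ℝ) * hermiteH n

/-- `z : Fin m → ℝ` enumerates the zeros of `P` in increasing order. -/
def IsZeroEnum (P : Polynomial ℝ) (m : ℕ) (z : Fin m → ℝ) : Prop :=
  StrictMono z ∧ (∀ i, P.eval (z i) = 0) ∧ (∀ x : ℝ, P.eval x = 0 → ∃ i, x = z i)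

/-- The eigenfunction `Φ_n^θ`. -/
noncomputable def Phi (n : ℕ) (θ : ℝ) (p : ℝ × ℝ) : ℝ :=
  (Real.cos θ * (hermiteH n).eval p.1 + Real.sin θ * (hermiteH n).eval p.2) *
    Real.exp (-(p.1 ^ 2 + p.2 ^ 2) / 2)

/-- A critical zero of `u` : a common zero of `u` and its differential. -/
def IsCriticalZero (u : ℝ × ℝ → ℝ) (p : ℝ × ℝ) : Prop :=
  u p = 0 ∧ fderiv ℝ u p = 0

/-- Nodal set of `u`. -/
def nodalSet (u : ℝ × ℝ → ℝ) : Set (ℝ × ℝ) := {p | u p = 0}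

/-- The set of nodal domains of `u`, i.e. of connected components of the
complement of the nodal set. -/
def nodalDomains (u : ℝ × ℝ → ℝ) : Set (Set (ℝ × ℝ)) :=
  {C | ∃ p, u p ≠ 0 ∧ C = connectedComponentIn {q | u q ≠ 0} p}

open Filter Topology

theorem strictMonoOn_of_deriv_nonneg_of_finite_zeros {D : Set ℝ} (hD : Convex ℝ D) {f : ℝ → ℝ}
    (hf : ContinuousOn f D) (hf' : DifferentiableOn ℝ f (interior D))
    (hnonneg : ∀ x ∈ interior D, 0 ≤ deriv f x)
    (hzeros : {x ∈ interior D | deriv f x = 0}.Finite) : StrictMonoOn f D := by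
  have hmono := monotoneOn_of_deriv_nonneg hD hf hf' hnonneg
  intro x hx y hy hxy
  refine (hmono hx hy hxy.le).lt_of_ne fun hfxy => ?_
  have hIcc : Icc x y ⊆ D := hD.ordConnected.out hx hy
  have hconst : ∀ z ∈ Icc x y, f z = f x := fun z hz =>
    le_antisymm (hfxy ▸ hmono (hIcc hz) hy hz.2) (hmono hx (hIcc hz) hz.1)
  refine hzeros.not_infinite ((Ioo_infinite hxy).mono fun z hz => ⟨?_, ?_⟩)
  · exact interior_mono hIcc (by rwa [interior_Icc])
  · have hlocal : f =ᶠ[𝓝 z] fun _ => f x :=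
      eventually_of_mem (Ioo_mem_nhds hz.1 hz.2) fun w hw => hconst w (Ioo_subset_Icc_self hw)
    rw [hlocal.deriv_eq, deriv_const]

theorem Polynomial.strictMonoOn_eval_of_derivative_nonneg {p : ℝ[X]} {D : Set ℝ}
    (hD : Convex ℝ D) (hp : derivative p ≠ 0)
    (hnonneg : ∀ x ∈ interior D, 0 ≤ (derivative p).eval x) : StrictMonoOn p.eval D := by
  refine strictMonoOn_of_deriv_nonneg_of_finite_zeros hD p.continuousOn p.differentiableOn
    (by simpa only [Polynomial.deriv] using hnonneg) ?_
  exact (finite_setOfPred_isRoot hp).subset fun x hx => (Polynomial.deriv p).symm.trans hx.2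

theorem hermiteH_add_two (n : ℕ) :
    hermiteH (n + 2) = C 2 * X * hermiteH (n + 1) - C ((2 * (n + 1) : ℕ) : ℝ) * hermiteH n :=
  rfl

theorem derivative_hermiteH_succ :
    ∀ n : ℕ, derivative (hermiteH (n + 1)) = C (2 * (n + 1) : ℝ) * hermiteH n
  | 0 => by simp [hermiteH]
  | 1 => by
    simp only [hermiteH]
    simp only [derivative_sub, derivative_mul, derivative_C, derivative_X, derivative_one,
      derivative_natCast, map_natCast]
    simp only [map_mul, map_add, map_ofNat, map_one, Nat.cast_one]
    ring
  | n + 2 => by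
    show derivative (hermiteH (n + 1 + 2)) = _
    rw [hermiteH_add_two (n + 1), derivative_sub, derivative_mul, derivative_C_mul,
      derivative_C_mul, derivative_hermiteH_succ (n + 1), derivative_hermiteH_succ n,
      hermiteH_add_two n]
    simp only [derivative_X, map_mul, map_add, map_natCast, map_ofNat, map_one, Nat.cast_add,
      Nat.cast_mul, Nat.cast_ofNat, Nat.cast_one]
    ring

theorem hermiteH_ne_zero : ∀ n : ℕ, hermiteH n ≠ 0
  | 0 => one_ne_zero
  | n + 1 => fun h => by
    have hderiv := derivative_hermiteH_succ n
    rw [h, derivative_zero, eq_comm, mul_eq_zero, C_eq_zero] at hderiv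
    exact hermiteH_ne_zero n (hderiv.resolve_left (by positivity))

theorem derivative_hermiteH_ne_zero {n : ℕ} (hn : n ≠ 0) : derivative (hermiteH n) ≠ 0 := by
  obtain ⟨m, rfl⟩ := Nat.exists_eq_succ_of_ne_zero hn
  rw [derivative_hermiteH_succ]
  exact mul_ne_zero (C_ne_zero.2 (by positivity)) (hermiteH_ne_zero m)

theorem derivative_derivative_hermiteH :
    ∀ n : ℕ, derivative (derivative (hermiteH n)) =
      C 2 * X * derivative (hermiteH n) - C (2 * n : ℝ) * hermiteH n
  | 0 => by simp [hermiteH]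
  | 1 => by
    simp only [hermiteH, derivative_C_mul, derivative_X, derivative_C, mul_one, Nat.cast_one]
    ring
  | n + 2 => by
    rw [derivative_hermiteH_succ (n + 1), derivative_C_mul, derivative_hermiteH_succ n,
      hermiteH_add_two n]
    simp only [map_mul, map_add, map_natCast, map_ofNat, map_one, Nat.cast_add, Nat.cast_mul,
      Nat.cast_ofNat, Nat.cast_one]
    ring

noncomputable def hermiteEnergy (n : ℕ) : ℝ[X] :=
  C (2 * n : ℝ) * hermiteH n ^ 2 + derivative (hermiteH n) ^ 2

theorem derivative_hermiteEnergy (n : ℕ) :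
    derivative (hermiteEnergy n) = C 4 * X * derivative (hermiteH n) ^ 2 := by
  rw [hermiteEnergy, derivative_add, derivative_C_mul, derivative_pow, derivative_pow,
    derivative_derivative_hermiteH]
  simp only [map_natCast, map_ofNat, map_mul]
  ring

theorem hermiteEnergy_strictMonoOn {n : ℕ} (hn : n ≠ 0) :
    StrictMonoOn (hermiteEnergy n).eval (Ici 0) := by
  refine strictMonoOn_eval_of_derivative_nonneg (convex_Ici 0) ?_ fun x hx => ?_
  · rw [derivative_hermiteEnergy]
    exact mul_ne_zero (mul_ne_zero (C_ne_zero.2 four_ne_zero) X_ne_zero)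
      (pow_ne_zero 2 (derivative_hermiteH_ne_zero hn))
  · rw [interior_Ici] at hx
    rw [derivative_hermiteEnergy]
    simp only [eval_mul, eval_C, eval_X, eval_pow]
    exact mul_nonneg (mul_nonneg zero_le_four hx.le) (sq_nonneg _)

theorem hermiteEnergy_eval_of_isRoot_derivative {n : ℕ} {x : ℝ}
    (hx : (derivative (hermiteH n)).eval x = 0) :
    (hermiteEnergy n).eval x = 2 * n * (hermiteH n).eval x ^ 2 := by
  simp [hermiteEnergy, hx]

/-- For `n ≥ 2`, the successive relative maxima of
`t ↦ |H_n(t)|` form an increasing sequence for `t ≥ 0`: if `0 ≤ s < t` are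
critical points of `H_n`, then `|H_n(s)| < |H_n(t)|`. -/
theorem hermite_relative_maxima_increasing
    (n : ℕ) (hn : 2 ≤ n) (s t : ℝ) (hs : 0 ≤ s) (hst : s < t)
    (h1 : (Polynomial.derivative (hermiteH n)).eval s = 0)
    (h2 : (Polynomial.derivative (hermiteH n)).eval t = 0) :
    |(hermiteH n).eval s| < |(hermiteH n).eval t| := by
  have henergy : (hermiteEnergy n).eval s < (hermiteEnergy n).eval t :=
    hermiteEnergy_strictMonoOn (by omega) hs (hs.trans hst.le) hst
  rw [hermiteEnergy_eval_of_isRoot_derivative h1,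
    hermiteEnergy_eval_of_isRoot_derivative h2] at henergy
  exact sq_lt_sq.1 (lt_of_mul_lt_mul_left henergy (by positivity))
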